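/- arXiv:2105.04076 — 5 statements merged into one kernel-verified Lean document; each statement's English description precedes it below -/
import Mathlib

section
/- Let X be a finite set and let p, q be fixed-point-free involutions of X (i.e. p∘p = id, q∘q = id, and p(x) ≠ x, q(x) ≠ x for all x ∈ X). Then the number of orbits of the cyclic group generated by the permutation p∘q acting on X equals twice the number of orbits of the subgroup generated by {p, q} acting on X. (In the language of pairings: 2·#(p ∨ q) = #(pq), where #(pq) is the number of cycles of pq, counting fixed points, and p ∨ q is the partition of X into orbits of ⟨p,q⟩.) -/
open MulAction Subgroup


/-- if `p, q` are fixed-point-free involutions of a finite set `X`, then the number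
of cycles of `pq` (i.e. the number of orbits of `⟨pq⟩` on `X`, counting fixed points) equals
twice the number of orbits of `⟨p, q⟩` on `X` (the blocks of `p ∨ q`):  `#(pq) = 2·#(p ∨ q)`. -/
theorem stmt_3 (X : Type*) [Fintype X] (p q : Equiv.Perm X)
    (hp2 : p * p = 1) (hq2 : q * q = 1)
    (hp : ∀ x, p x ≠ x) (hq : ∀ x, q x ≠ x) :
    Nat.card (MulAction.orbitRel.Quotient (↥(Subgroup.zpowers (p * q))) X)
      = 2 * Nat.card
          (MulAction.orbitRel.Quotient (↥(Subgroup.closure ({p, q} : Set (Equiv.Perm X)))) X) := by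
  classical
  set c : Equiv.Perm X := p * q with hc
  have hpinv : p⁻¹ = p := inv_eq_of_mul_eq_one_right hp2
  have hqinv : q⁻¹ = q := inv_eq_of_mul_eq_one_right hq2
  have hconj : p * c * p⁻¹ = c⁻¹ := by
    rw [hpinv, hc, mul_inv_rev, hpinv, hqinv]
    calc p * (p * q) * p = (p * p) * (q * p) := by group
      _ = q * p := by rw [hp2, one_mul]
  have hconjn : ∀ n : ℤ, p * c ^ n = c ^ (-n) * p := by
    intro n
    have h1 : p * c ^ n * p⁻¹ = c⁻¹ ^ n := by
      have h := map_zpow (MulAut.conj p) c n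
      simpa [MulAut.conj_apply, hconj] using h
    rw [inv_zpow', hpinv] at h1
    calc p * c ^ n = (p * c ^ n * p) * p := by
          rw [mul_assoc, hp2, mul_one]
      _ = c ^ (-n) * p := by rw [h1]
  have hqc : q = c⁻¹ * p := by
    rw [hc, mul_inv_rev, hpinv, hqinv, mul_assoc, hp2, mul_one]
  -- Lemma B : c^n x ≠ p x
  have lemB : ∀ (x : X) (n : ℤ), (c ^ n) x ≠ p x := by
    intro x n h
    rcases Int.even_or_odd n with ⟨k, hk⟩ | ⟨k, hk⟩
    · apply hp ((c ^ k) x)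
      have h1 : p ((c ^ k) x) = (c ^ (-k)) (p x) := by
        rw [← Equiv.Perm.mul_apply, hconjn k, Equiv.Perm.mul_apply]
      have e : -k + n = k := by omega
      rw [h1, ← h, ← Equiv.Perm.mul_apply, ← zpow_add, e]
    · apply hq ((c ^ k) x)
      have hq1 : q * c ^ k = c ^ (-(k + 1)) * p := by
        rw [hqc, mul_assoc, hconjn k, ← mul_assoc, ← zpow_neg_one, ← zpow_add]
        have e : (-1 : ℤ) + -k = -(k + 1) := by ring
        rw [e]
      have h1 : q ((c ^ k) x) = (c ^ (-(k + 1))) (p x) := by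
        rw [← Equiv.Perm.mul_apply, hq1, Equiv.Perm.mul_apply]
      have e : -(k + 1) + n = k := by omega
      rw [h1, ← h, ← Equiv.Perm.mul_apply, ← zpow_add, e]
  -- Lemma A : every element of the closure is c^n or c^n * p
  have lemA : ∀ g ∈ Subgroup.closure ({p, q} : Set (Equiv.Perm X)),
      ∃ n : ℤ, g = c ^ n ∨ g = c ^ n * p := by
    intro g hg
    induction hg using Subgroup.closure_induction with
    | mem x hx =>
      rcases hx with rfl | hx
      · exact ⟨0, Or.inr (by simp)⟩
      · rcases hx with rfl
        exact ⟨-1, Or.inr (by rw [hqc, zpow_neg_one])⟩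
    | one => exact ⟨0, Or.inl (by simp)⟩
    | mul x y hx hy ihx ihy =>
      obtain ⟨m, hm⟩ := ihx
      obtain ⟨n, hn⟩ := ihy
      rcases hm with rfl | rfl <;> rcases hn with rfl | rfl
      · exact ⟨m + n, Or.inl (zpow_add c m n).symm⟩
      · exact ⟨m + n, Or.inr (by rw [← mul_assoc, ← zpow_add])⟩
      · refine ⟨m - n, Or.inr ?_⟩
        rw [mul_assoc, hconjn n, ← mul_assoc, ← zpow_add, sub_eq_add_neg]
      · refine ⟨m - n, Or.inl ?_⟩
        rw [mul_assoc, ← mul_assoc p, hconjn n, mul_assoc, hp2, mul_one,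
          ← zpow_add, sub_eq_add_neg]
    | inv x hx ihx =>
      obtain ⟨n, hn⟩ := ihx
      rcases hn with rfl | rfl
      · exact ⟨-n, Or.inl (by rw [← zpow_neg])⟩
      · refine ⟨n, Or.inr ?_⟩
        rw [mul_inv_rev, hpinv, ← zpow_neg, hconjn, neg_neg]
  set H := Subgroup.closure ({p, q} : Set (Equiv.Perm X)) with hH
  have hpH : p ∈ H := Subgroup.subset_closure (by simp)
  have hqH : q ∈ H := Subgroup.subset_closure (by simp)
  have hle : Subgroup.zpowers c ≤ H := by
    rw [Subgroup.zpowers_le]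
    exact mul_mem hpH hqH
  -- the descent map between quotients
  set Q1 := MulAction.orbitRel.Quotient (↥(Subgroup.zpowers c)) X with hQ1
  set Q2 := MulAction.orbitRel.Quotient (↥H) X with hQ2
  let g : Q1 → Q2 := Quotient.map' id (by
    rintro a b ⟨u, hu⟩
    exact ⟨⟨(u : Equiv.Perm X), hle u.2⟩, hu⟩)
  haveI : Fintype Q1 := Fintype.ofFinite _
  haveI : Fintype Q2 := Fintype.ofFinite _
  have key : ∀ w : Q2, Nat.card {v : Q1 // g v = w} = 2 := by
    intro w
    induction w using Quotient.inductionOn' with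
    | h x =>
    have hne : (Quotient.mk'' x : Q1) ≠ Quotient.mk'' (p x) := by
      intro hcon
      obtain ⟨u, hu⟩ := Quotient.exact' hcon.symm
      obtain ⟨n, hn⟩ := Subgroup.mem_zpowers_iff.mp u.2
      apply lemB x n
      have h2 : (u : Equiv.Perm X) x = p x := hu
      rw [hn]; exact h2
    have hset : {v : Q1 // g v = Quotient.mk'' x} ≃
        ({Quotient.mk'' x, Quotient.mk'' (p x)} : Set Q1) := by
      apply Equiv.subtypeEquiv (Equiv.refl _)
      intro v
      induction v using Quotient.inductionOn' with
      | h y =>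
      simp only [Equiv.refl_apply, Set.mem_insert_iff, Set.mem_singleton_iff]
      constructor
      · intro hv
        have hv2 : (Quotient.mk'' y : Q2) = Quotient.mk'' x := by
          rw [← hv]; rfl
        obtain ⟨u, hu⟩ := Quotient.exact' hv2
        obtain ⟨n, hn⟩ := lemA (u : Equiv.Perm X) u.2
        rcases hn with hn | hn
        · left
          apply Quotient.sound'
          refine ⟨⟨c ^ n, zpow_mem (Subgroup.mem_zpowers c) n⟩, ?_⟩
          show c ^ n • x = y
          rw [← hn]
          exact hu
        · right
          apply Quotient.sound'
          refine ⟨⟨c ^ n, zpow_mem (Subgroup.mem_zpowers c) n⟩, ?_⟩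
          show c ^ n • p x = y
          rw [← hu]
          show (c ^ n) (p x) = (u : Equiv.Perm X) x
          rw [hn, Equiv.Perm.mul_apply]
      · rintro (hv | hv)
        · rw [hv]; rfl
        · rw [hv]
          show (Quotient.mk'' (p x) : Q2) = Quotient.mk'' x
          exact Quotient.sound' ⟨⟨p, hpH⟩, rfl⟩
    rw [Nat.card_congr hset, Nat.card_coe_set_eq, Set.ncard_pair hne]
  have hcount : Nat.card Q1 = 2 * Nat.card Q2 := by
    have e : (Σ w : Q2, {v : Q1 // g v = w}) ≃ Q1 := Equiv.sigmaFiberEquiv g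
    rw [← Nat.card_congr e, Nat.card_eq_fintype_card, Fintype.card_sigma,
      Nat.card_eq_fintype_card (α := Q2)]
    have hfib : ∀ w : Q2, Fintype.card {v : Q1 // g v = w} = 2 := by
      intro w
      rw [← Nat.card_eq_fintype_card]
      exact key w
    simp [hfib, mul_comm]
  exact hcount
end

section
/- Let X be a finite set and let p, q be fixed-point-free involutions of X. Then q·(pq)⁻¹·q = pq as permutations, so conjugation-inversion c ↦ q·c⁻¹·q maps the set of (nontrivial) cycles of the permutation pq bijectively to itself; moreover for every nontrivial cycle c of pq one has q·c⁻¹·q ≠ c, and for every x in the support of c, the orbit of x under the subgroup ⟨p,q⟩ generated by p and q equals supp(c) ∪ supp(q·c⁻¹·q) = supp(c) ∪ q(supp(c)). -/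
/-!
Write `t = pq`. Conjugating by the involution `q` inverts `t`, i.e. `q t^k q = t^{-k}`, which gives
`q·t⁻¹·q = t` and shows that `c ↦ q·c⁻¹·q` is an involution permuting the cycles of `t`.
If a cycle `c` were fixed by it, some `x` and `q x` would lie on the same `t`-cycle, `q x = t^k x`;
then `t^m x` is a fixed point of `q` when `k = 2m`, and `t^(m+1) x` a fixed point of `p = t q`
when `k = 2m + 1`. Finally `⟨p, q⟩ = ⟨t, q⟩` consists of the `t^k` and the `q t^k`, so the
orbit of `x` is the `t`-cycle of `x` together with its image under `q`.
-/

open Equiv Equiv.Perm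
open scoped Pointwise

section Group

variable {G : Type*} [Group G] {p q : G}

theorem mul_inv_mul_eq_of_mul_self_eq_one (hp2 : p * p = 1) :
    q * (p * q)⁻¹ * q = p * q := by
  rw [mul_inv_rev, inv_eq_of_mul_eq_one_right hp2]
  group

theorem zpow_conj_eq_zpow_neg_of_mul_self_eq_one (hp2 : p * p = 1) (hq2 : q * q = 1) (k : ℤ) :
    q * (p * q) ^ k * q = (p * q) ^ (-k) := by
  have hqinv : q⁻¹ = q := inv_eq_of_mul_eq_one_right hq2
  have hconj : q * (p * q) * q⁻¹ = (p * q)⁻¹ := by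
    rw [mul_inv_rev, inv_eq_of_mul_eq_one_right hp2, hqinv]
    simp only [mul_assoc, hq2, mul_one]
  rw [zpow_neg, ← inv_zpow, ← hconj, conj_zpow, hqinv]

theorem involutive_mul_inv_mul (hq2 : q * q = 1) :
    Function.Involutive fun c : G => q * c⁻¹ * q := by
  intro c
  rw [← inv_eq_of_mul_eq_one_right hq2]
  group

end Group

namespace Equiv.Perm

variable {X : Type*} {p q : Perm X}

theorem apply_mul_zpow_apply (hp2 : p * p = 1) (hq2 : q * q = 1) (k : ℤ) (y : X) :
    q (((p * q) ^ k) y) = ((p * q) ^ (-k)) (q y) := by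
  rw [← zpow_conj_eq_zpow_neg_of_mul_self_eq_one hp2 hq2, mul_apply, mul_apply,
    ← mul_apply q q, hq2, one_apply]

theorem not_sameCycle_mul_apply_right (hp2 : p * p = 1) (hq2 : q * q = 1) (hp : ∀ x, p x ≠ x)
    (hq : ∀ x, q x ≠ x) (x : X) : ¬ (p * q).SameCycle x (q x) := by
  have hpt : p = p * q * q := by rw [mul_assoc, hq2, mul_one]
  rintro ⟨k, hk⟩
  obtain ⟨m, rfl | rfl⟩ := Int.even_or_odd' k
  · apply hq (((p * q) ^ m) x)
    rw [apply_mul_zpow_apply hp2 hq2, ← hk, ← mul_apply, ← zpow_add]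
    congr 2; ring
  · apply hp (((p * q) ^ (m + 1)) x)
    nth_rw 1 [hpt]
    rw [mul_apply, apply_mul_zpow_apply hp2 hq2, ← hk, ← mul_apply, ← mul_apply,
      ← zpow_one_add, ← zpow_add]
    congr 2; ring

theorem closure_pair_le_stabilizer (hp2 : p * p = 1) (hq2 : q * q = 1) (x : X) :
    Subgroup.closure {p, q} ≤ MulAction.stabilizer (Perm X)
      ({y | (p * q).SameCycle x y} ∪ q ⁻¹' {y | (p * q).SameCycle x y}) := by
  have hqq : Function.Involutive q := fun y => by rw [← mul_apply, hq2, one_apply]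
  have hqt (y : X) : q ((p * q) y) = (p * q)⁻¹ (q y) := by
    simpa using apply_mul_zpow_apply hp2 hq2 1 y
  have hqS : q ∈ MulAction.stabilizer (Perm X)
      ({y | (p * q).SameCycle x y} ∪ q ⁻¹' {y | (p * q).SameCycle x y}) := by
    refine MulAction.mem_stabilizer_set.mpr fun y => ?_
    simp only [Set.mem_union, Set.mem_preimage, Set.mem_ofPred_eq, Perm.smul_def, hqq y]
    exact or_comm
  have htS : p * q ∈ MulAction.stabilizer (Perm X)
      ({y | (p * q).SameCycle x y} ∪ q ⁻¹' {y | (p * q).SameCycle x y}) := by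
    refine MulAction.mem_stabilizer_set.mpr fun y => ?_
    simp only [Set.mem_union, Set.mem_preimage, Set.mem_ofPred_eq, Perm.smul_def, hqt,
      sameCycle_apply_right, coe_inv, sameCycle_symm_apply_right]
  rw [Subgroup.closure_le, Set.insert_subset_iff, Set.singleton_subset_iff]
  refine ⟨?_, hqS⟩
  simpa [mul_assoc, hq2] using mul_mem htS hqS

theorem orbit_closure_pair_eq (hp2 : p * p = 1) (hq2 : q * q = 1) (x : X) :
    MulAction.orbit (Subgroup.closure ({p, q} : Set (Perm X))) x
      = {y | (p * q).SameCycle x y} ∪ q '' {y | (p * q).SameCycle x y} := by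
  have hqq : Function.Involutive q := fun y => by rw [← mul_apply, hq2, one_apply]
  rw [hqq.image_eq_preimage_symm]
  apply Set.Subset.antisymm
  · rintro _ ⟨g, rfl⟩
    exact (MulAction.mem_stabilizer_set.mp (closure_pair_le_stabilizer hp2 hq2 x g.2) x).2
      (Or.inl (SameCycle.refl _ _))
  · have hp_mem : p ∈ Subgroup.closure ({p, q} : Set (Perm X)) :=
      Subgroup.subset_closure (by simp)
    have hq_mem : q ∈ Subgroup.closure ({p, q} : Set (Perm X)) :=
      Subgroup.subset_closure (by simp)
    have ht_mem := mul_mem hp_mem hq_mem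
    rintro y (⟨k, rfl⟩ | ⟨k, hk⟩)
    · exact ⟨⟨(p * q) ^ k, zpow_mem ht_mem k⟩, rfl⟩
    · refine ⟨⟨q * (p * q) ^ k, mul_mem hq_mem (zpow_mem ht_mem k)⟩, ?_⟩
      change q (((p * q) ^ k) x) = y
      rw [hk, hqq]

variable [Fintype X] [DecidableEq X]

theorem coe_support_cycleOf {f : Perm X} {x : X} (hx : x ∈ f.support) :
    ((f.cycleOf x).support : Set X) = {y | f.SameCycle x y} := by
  ext y
  rw [Finset.mem_coe, mem_support_cycleOf_iff]
  exact and_iff_left hx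

theorem coe_support_mul_inv_mul (hq : q * q = 1) (c : Perm X) :
    ((q * c⁻¹ * q).support : Set X) = q '' c.support := by
  have h := support_conj (σ := q) (τ := c⁻¹)
  rw [inv_eq_of_mul_eq_one_right hq, support_inv] at h
  rw [h, Finset.coe_map]
  rfl

theorem inv_mem_cycleFactorsFinset_inv {f c : Perm X} (hc : c ∈ f.cycleFactorsFinset) :
    c⁻¹ ∈ f⁻¹.cycleFactorsFinset := by
  obtain ⟨x, hx⟩ := (mem_cycleFactorsFinset_iff.mp hc).1.nonempty_support
  rw [cycle_is_cycleOf hx hc, cycleOf_inv]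
  convert cycleOf_mem_cycleFactorsFinset_iff.mpr _
  rw [support_inv]
  exact mem_cycleFactorsFinset_support_le hc hx

theorem mul_inv_mul_mem_cycleFactorsFinset (hq : q * q = 1) {f c : Perm X}
    (hc : c ∈ f.cycleFactorsFinset) : q * c⁻¹ * q ∈ (q * f⁻¹ * q).cycleFactorsFinset := by
  have h := (mem_cycleFactorsFinset_conj f⁻¹ q c⁻¹).mpr (inv_mem_cycleFactorsFinset_inv hc)
  rwa [inv_eq_of_mul_eq_one_right hq] at h

theorem mul_inv_mul_ne_of_mem_cycleFactorsFinset (hp2 : p * p = 1) (hq2 : q * q = 1)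
    (hp : ∀ x, p x ≠ x) (hq : ∀ x, q x ≠ x) {c : Perm X}
    (hc : c ∈ (p * q).cycleFactorsFinset) : q * c⁻¹ * q ≠ c := by
  intro hfix
  obtain ⟨x, hx⟩ := (mem_cycleFactorsFinset_iff.mp hc).1.nonempty_support
  have hqx : q x ∈ c.support := by
    rw [← Finset.mem_coe, ← hfix, coe_support_mul_inv_mul hq2]
    exact Set.mem_image_of_mem q hx
  rw [cycle_is_cycleOf hx hc, mem_support_cycleOf_iff] at hqx
  exact not_sameCycle_mul_apply_right hp2 hq2 hp hq x hqx.1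

end Equiv.Perm

/-- for fixed-point-free involutions `p, q` of a finite set `X` one has
`q·(pq)⁻¹·q = pq`, so `c ↦ q·c⁻¹·q` maps the set of (nontrivial) cycles of `pq` bijectively to
itself; moreover `q·c⁻¹·q ≠ c` for every cycle `c` of `pq`, and for every `x` in the support of
`c`, the orbit of `x` under `⟨p, q⟩` equals `supp(c) ∪ supp(q·c⁻¹·q) = supp(c) ∪ q(supp(c))`. -/
theorem stmt_4 (X : Type*) [Fintype X] [DecidableEq X] (p q : Equiv.Perm X)
    (hp2 : p * p = 1) (hq2 : q * q = 1)
    (hp : ∀ x, p x ≠ x) (hq : ∀ x, q x ≠ x) :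
    q * (p * q)⁻¹ * q = p * q
    ∧ Set.BijOn (fun c => q * c⁻¹ * q)
        ↑((p * q).cycleFactorsFinset) ↑((p * q).cycleFactorsFinset)
    ∧ (∀ c ∈ (p * q).cycleFactorsFinset, q * c⁻¹ * q ≠ c)
    ∧ (∀ c ∈ (p * q).cycleFactorsFinset, ∀ x ∈ c.support,
        MulAction.orbit (↥(Subgroup.closure ({p, q} : Set (Equiv.Perm X)))) x
            = ↑c.support ∪ ↑(q * c⁻¹ * q).support
        ∧ (↑(q * c⁻¹ * q).support : Set X) = ⇑q '' ↑c.support) := by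
  have hinv : q * (p * q)⁻¹ * q = p * q := mul_inv_mul_eq_of_mul_self_eq_one hp2
  have hmaps : Set.MapsTo (fun c => q * c⁻¹ * q)
      ↑((p * q).cycleFactorsFinset) ↑((p * q).cycleFactorsFinset) := fun c hc => by
    have h := mul_inv_mul_mem_cycleFactorsFinset hq2 (Finset.mem_coe.mp hc)
    rwa [hinv] at h
  have hinvol := involutive_mul_inv_mul hq2
  refine ⟨hinv, Set.InvOn.bijOn ⟨fun c _ => hinvol c, fun c _ => hinvol c⟩ hmaps hmaps,
    fun c hc => mul_inv_mul_ne_of_mem_cycleFactorsFinset hp2 hq2 hp hq hc, fun c hc x hx => ?_⟩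
  have hxt := mem_cycleFactorsFinset_support_le hc hx
  obtain rfl := cycle_is_cycleOf hx hc
  rw [coe_support_mul_inv_mul hq2, coe_support_cycleOf hxt]
  exact ⟨orbit_closure_pair_eq hp2 hq2 x, rfl⟩
end

section
/- Let (b_N), (d_N), (b'_N), (d'_N) be non-decreasing sequences of positive integers with b_N·d_N = b'_N·d'_N = M_N for all N, where M_N → ∞, and let ϑ, ϑ' ∈ {−1, 1}. Write Γ_N = Γ_{b_N, d_N}^{(ϑ)} and Γ'_N = Γ_{b'_N, d'_N}^{(ϑ')}. If liminf_{N→∞} (1/M_N²) · #{ (i,j) ∈ [M_N]² : Γ_N(i,j) = Γ'_N(i,j) } > 0, then liminf_{N→∞} E[ tr( U_{M_N}^{Γ_N} (U_{M_N}^{Γ'_N})* ) ] > 0; in particular E[ tr( U_{M_N}^{Γ_N} (U_{M_N}^{Γ'_N})* ) ] does not converge to 0 (which witnesses that the partial transposes U_{M_N}^{Γ_N} and U_{M_N}^{Γ'_N} are not asymptotically *-free). -/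
/-!
Left invariance of the Haar measure under a diagonal sign change and under row permutations,
together with `Uᴴ U = 1`, gives the second-moment formula
`E[U_ab · conj U_cd] = δ_ac δ_bd / N`. Expanding the trace, `E[tr(U^Γ (U^Γ')*)]` is
therefore exactly the proportion `#{(i,j) : Γ(i,j) = Γ'(i,j)} / N²`, so the hypothesis on the
liminf of these proportions is the conclusion.
-/

open Filter MeasureTheory Matrix

/-- The partial transpose `Γ_{b,d}^{(ϑ)} : [N]² → [N]²` for `N = b·d`, as an entry permutation.
Identifying `[N] ≃ [b] × [d]` via `i = a₁·d + a₂` (`0`-based), the right partial transpose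
(`θ = true`, i.e. `ϑ = 1`) swaps `a₂` and `a₋₂`, while the left partial transpose (`θ = false`,
i.e. `ϑ = -1`) swaps `a₁` and `a₋₁`. -/
def pt {b d M : ℕ} (θ : Bool) (h : b * d = M) :
    Fin M × Fin M → Fin M × Fin M := fun x =>
  let e : Fin M ≃ Fin b × Fin d := (finCongr h).symm.trans finProdFinEquiv.symm
  let u := e x.1
  let v := e x.2
  if θ then (e.symm (u.1, v.2), e.symm (v.1, u.2))
  else (e.symm (v.1, u.2), e.symm (u.1, v.2))

/-- For a map `σ : [N]² → [N]²`, `U^σ` is the matrix whose `(i,j)` entry is `U_{σ(i,j)}`. -/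
def entryMap {N : ℕ} (σ : Fin N × Fin N → Fin N × Fin N)
    (U : Matrix (Fin N) (Fin N) ℂ) : Matrix (Fin N) (Fin N) ℂ :=
  Matrix.of fun i j => U (σ (i, j)).1 (σ (i, j)).2

noncomputable instance (N : ℕ) : MeasurableSpace (Matrix.unitaryGroup (Fin N) ℂ) := borel _

instance (N : ℕ) : BorelSpace (unitaryGroup (Fin N) ℂ) := ⟨rfl⟩

section HaarUnitary

variable {n : Type*} [Fintype n] [DecidableEq n]

lemma diagonal_mem_unitaryGroup {v : n → ℂ} (hv : ∀ i, star (v i) * v i = 1) :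
    diagonal v ∈ unitaryGroup n ℂ := by
  rw [mem_unitaryGroup_iff', star_eq_conjTranspose, diagonal_conjTranspose,
    diagonal_mul_diagonal]
  simp only [Pi.star_apply, hv, diagonal_one]

lemma permMatrix_mem_unitaryGroup (σ : Equiv.Perm n) :
    σ.permMatrix ℂ ∈ unitaryGroup n ℂ := by
  rw [mem_unitaryGroup_iff', star_eq_conjTranspose, conjTranspose_permMatrix,
    ← permMatrix_mul, mul_inv_cancel, permMatrix_one]

lemma Matrix.UnitaryGroup.sum_entry_mul_star_entry (U : unitaryGroup n ℂ) (b d : n) :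
    ∑ a, (U : Matrix n n ℂ) a b * star ((U : Matrix n n ℂ) a d) = if b = d then 1 else 0 := by
  have h := congrFun₂ (UnitaryGroup.star_mul_self U) d b
  simp only [Matrix.mul_apply, star_apply, Matrix.one_apply] at h
  simp only [mul_comm ((U : Matrix n n ℂ) _ b), h, eq_comm]

variable [MeasurableSpace (unitaryGroup n ℂ)] [BorelSpace (unitaryGroup n ℂ)]
  (μ : Measure (unitaryGroup n ℂ))

lemma integrable_entry_mul_star_entry [IsFiniteMeasure μ] (a b c d : n) :
    Integrable (fun U : unitaryGroup n ℂ =>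
      (U : Matrix n n ℂ) a b * star ((U : Matrix n n ℂ) c d)) μ := by
  refine .of_bound ((continuous_subtype_val.matrix_elem a b).mul
    (continuous_subtype_val.matrix_elem c d).star).aestronglyMeasurable 1
    (ae_of_all _ fun U => ?_)
  rw [norm_mul, norm_star]
  exact mul_le_one₀ (entry_norm_bound_of_unitary U.2 a b) (norm_nonneg _)
    (entry_norm_bound_of_unitary U.2 c d)

variable [μ.IsMulLeftInvariant]

lemma integral_entry_mul_star_entry_of_ne {a c : n} (hac : a ≠ c) (b d : n) :
    ∫ U : unitaryGroup n ℂ, (U : Matrix n n ℂ) a b * star ((U : Matrix n n ℂ) c d) ∂μ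
      = 0 := by
  let v : n → ℂ := fun k => if k = a then -1 else 1
  let g : unitaryGroup n ℂ := ⟨diagonal v, diagonal_mem_unitaryGroup fun k => by
    by_cases h : k = a <;> simp [v, h]⟩
  -- multiplying by `g` flips the sign of row `a` only, hence of the integrand
  have hflip := integral_mul_left_eq_self (μ := μ)
    (fun U : unitaryGroup n ℂ => (U : Matrix n n ℂ) a b * star ((U : Matrix n n ℂ) c d)) g
  simp only [UnitaryGroup.mul_apply, g, diagonal_mul, v, if_neg hac.symm, if_pos,
    neg_mul, one_mul, integral_neg] at hflip
  exact CharZero.neg_eq_self_iff.mp hflip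

lemma integral_entry_mul_star_entry_row_eq (a a' b d : n) :
    ∫ U : unitaryGroup n ℂ, (U : Matrix n n ℂ) a b * star ((U : Matrix n n ℂ) a d) ∂μ
      = ∫ U : unitaryGroup n ℂ,
          (U : Matrix n n ℂ) a' b * star ((U : Matrix n n ℂ) a' d) ∂μ := by
  let g : unitaryGroup n ℂ :=
    ⟨(Equiv.swap a a').permMatrix ℂ, permMatrix_mem_unitaryGroup _⟩
  have hswap := integral_mul_left_eq_self (μ := μ)
    (fun U : unitaryGroup n ℂ => (U : Matrix n n ℂ) a b * star ((U : Matrix n n ℂ) a d)) g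
  simp only [UnitaryGroup.mul_apply, g, PEquiv.toMatrix_toPEquiv_mul, submatrix_apply,
    Equiv.swap_apply_left, id_eq] at hswap
  exact hswap.symm

lemma integral_entry_mul_star_entry [IsProbabilityMeasure μ] (a b c d : n) :
    ∫ U : unitaryGroup n ℂ, (U : Matrix n n ℂ) a b * star ((U : Matrix n n ℂ) c d) ∂μ
      = if a = c ∧ b = d then (Fintype.card n : ℂ)⁻¹ else 0 := by
  rcases eq_or_ne a c with rfl | hac
  · have hcard : (Fintype.card n : ℂ) ≠ 0 :=
      Nat.cast_ne_zero.mpr (Fintype.card_pos_iff.mpr ⟨a⟩).ne'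
    have hsum := integral_congr_ae (μ := μ) (ae_of_all _ fun U =>
      Matrix.UnitaryGroup.sum_entry_mul_star_entry U b d)
    rw [integral_finsetSum _ fun a' _ => integrable_entry_mul_star_entry μ a' b a' d,
      Finset.sum_congr rfl fun a' _ => integral_entry_mul_star_entry_row_eq μ a' a b d,
      Finset.sum_const, Finset.card_univ, nsmul_eq_mul] at hsum
    simp only [true_and]
    split_ifs with hbd
    · subst hbd
      simp only [if_true, integral_const, probReal_univ, one_smul] at hsum
      exact eq_inv_of_mul_eq_one_right hsum
    · simpa [hbd, hcard] using hsum
  · rw [integral_entry_mul_star_entry_of_ne μ hac, if_neg fun h => hac h.1]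

end HaarUnitary

lemma trace_entryMap_mul_conjTranspose {N : ℕ} (Γ Γ' : Fin N × Fin N → Fin N × Fin N)
    (U : Matrix (Fin N) (Fin N) ℂ) :
    (entryMap Γ U * (entryMap Γ' U)ᴴ).trace
      = ∑ p, U (Γ p).1 (Γ p).2 * star (U (Γ' p).1 (Γ' p).2) := by
  simp [trace, mul_apply, entryMap, Fintype.sum_prod_type]

lemma integral_trace_entryMap_mul_conjTranspose {N : ℕ} (μ : Measure (unitaryGroup (Fin N) ℂ))
    [μ.IsMulLeftInvariant] [IsProbabilityMeasure μ] (Γ Γ' : Fin N × Fin N → Fin N × Fin N) :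
    ∫ U : unitaryGroup (Fin N) ℂ,
      (entryMap Γ (U : Matrix (Fin N) (Fin N) ℂ)
        * (entryMap Γ' (U : Matrix (Fin N) (Fin N) ℂ))ᴴ).trace / (N : ℂ) ∂μ
      = (((Finset.univ.filter fun p => Γ p = Γ' p).card / (N : ℝ) ^ 2 : ℝ) : ℂ) := by
  push_cast
  simp only [trace_entryMap_mul_conjTranspose]
  rw [integral_div, integral_finsetSum _ fun p _ => integrable_entry_mul_star_entry μ _ _ _ _]
  simp only [integral_entry_mul_star_entry, ← Prod.ext_iff, Fintype.card_fin]
  rw [Finset.sum_ite, Finset.sum_const_zero, add_zero, Finset.sum_const, nsmul_eq_mul]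
  ring

lemma not_tendsto_nhds_zero_of_pos_liminf_re {α : Type*} {l : Filter α} [l.NeBot] {z : α → ℂ}
    (h : 0 < liminf (fun x => (z x).re) l) : ¬ Tendsto z l (nhds 0) := fun hz =>
  h.ne' ((Complex.continuous_re.tendsto 0).comp hz).liminf_eq

theorem stmt_6_general (b d b' d' M : ℕ → ℕ)
    (hM : ∀ n, b n * d n = M n) (hM' : ∀ n, b' n * d' n = M n)
    (θ θ' : Bool)
    (μ : ∀ n, Measure (Matrix.unitaryGroup (Fin (M n)) ℂ))
    (hμ : ∀ n, (μ n).IsHaarMeasure) (hμp : ∀ n, IsProbabilityMeasure (μ n))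
    (hliminf : 0 < liminf
      (fun n => ((Finset.univ.filter fun x : Fin (M n) × Fin (M n) =>
          pt θ (hM n) x = pt θ' (hM' n) x).card : ℝ) / (M n : ℝ) ^ 2)
      atTop) :
    0 < liminf
        (fun n => (∫ U : Matrix.unitaryGroup (Fin (M n)) ℂ,
          (entryMap (pt θ (hM n)) (U : Matrix (Fin (M n)) (Fin (M n)) ℂ)
            * (entryMap (pt θ' (hM' n)) (U : Matrix (Fin (M n)) (Fin (M n)) ℂ))ᴴ).trace
              / (M n : ℂ) ∂(μ n)).re)
        atTop
    ∧ ¬ Tendsto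
        (fun n => ∫ U : Matrix.unitaryGroup (Fin (M n)) ℂ,
          (entryMap (pt θ (hM n)) (U : Matrix (Fin (M n)) (Fin (M n)) ℂ)
            * (entryMap (pt θ' (hM' n)) (U : Matrix (Fin (M n)) (Fin (M n)) ℂ))ᴴ).trace
              / (M n : ℂ) ∂(μ n))
        atTop (nhds 0) := by
  have hexp := fun n =>
    haveI := hμ n
    haveI := hμp n
    integral_trace_entryMap_mul_conjTranspose (μ n) (pt θ (hM n)) (pt θ' (hM' n))
  simp only [hexp, Complex.ofReal_re]
  exact ⟨hliminf, not_tendsto_nhds_zero_of_pos_liminf_re (by simpa only [Complex.ofReal_re])⟩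

/-- for non-decreasing sequences of positive integers with
`b_N·d_N = b'_N·d'_N = M_N → ∞` and `ϑ, ϑ' ∈ {−1,1}` (encoded by `θ, θ' : Bool`), writing
`Γ_N = Γ_{b_N,d_N}^{(ϑ)}` and `Γ'_N = Γ_{b'_N,d'_N}^{(ϑ')}`: if
`liminf (1/M_N²)·#{(i,j) : Γ_N(i,j) = Γ'_N(i,j)} > 0`, then
`liminf E[tr(U_{M_N}^{Γ_N}(U_{M_N}^{Γ'_N})*)] > 0`; in particular this expectation does not
converge to `0` (witnessing failure of asymptotic `*`-freeness). -/
theorem stmt_6 (b d b' d' M : ℕ → ℕ)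
    (hbm : Monotone b) (hdm : Monotone d) (hb'm : Monotone b') (hd'm : Monotone d')
    (hb : ∀ n, 0 < b n) (hd : ∀ n, 0 < d n) (hb' : ∀ n, 0 < b' n) (hd' : ∀ n, 0 < d' n)
    (hM : ∀ n, b n * d n = M n) (hM' : ∀ n, b' n * d' n = M n)
    (hMtop : Tendsto M atTop atTop) (θ θ' : Bool)
    (μ : ∀ n, Measure (Matrix.unitaryGroup (Fin (M n)) ℂ))
    (hμ : ∀ n, (μ n).IsHaarMeasure) (hμp : ∀ n, IsProbabilityMeasure (μ n))
    (hliminf : 0 < liminf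
      (fun n => ((Finset.univ.filter fun x : Fin (M n) × Fin (M n) =>
          pt θ (hM n) x = pt θ' (hM' n) x).card : ℝ) / (M n : ℝ) ^ 2)
      atTop) :
    0 < liminf
        (fun n => (∫ U : Matrix.unitaryGroup (Fin (M n)) ℂ,
          (entryMap (pt θ (hM n)) (U : Matrix (Fin (M n)) (Fin (M n)) ℂ)
            * (entryMap (pt θ' (hM' n)) (U : Matrix (Fin (M n)) (Fin (M n)) ℂ))ᴴ).trace
              / (M n : ℂ) ∂(μ n)).re)
        atTop
    ∧ ¬ Tendsto
        (fun n => ∫ U : Matrix.unitaryGroup (Fin (M n)) ℂ,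
          (entryMap (pt θ (hM n)) (U : Matrix (Fin (M n)) (Fin (M n)) ℂ)
            * (entryMap (pt θ' (hM' n)) (U : Matrix (Fin (M n)) (Fin (M n)) ℂ))ᴴ).trace
              / (M n : ℂ) ∂(μ n))
        atTop (nhds 0) :=
  stmt_6_general b d b' d' M hM hM' θ θ' μ hμ hμp hliminf
end

section
/- Let (b_N), (d_N), (b'_N), (d'_N) be non-decreasing sequences of positive integers with b_N·d_N = b'_N·d'_N = M_N for all N, where M_N → ∞, and let ϑ ∈ {−1, 1}. Then lim_{N→∞} (1/M_N²) · #{ (i,j) ∈ [M_N]² : Γ_{b_N,d_N}^{(ϑ)}(i,j) = Γ_{b'_N,d'_N}^{(ϑ)}(i,j) } = 0 if and only if lim_{N→∞} lcm(b_N, b'_N)/min(b_N, b'_N) = ∞ and lim_{N→∞} lcm(d_N, d'_N)/min(d_N, d'_N) = ∞. -/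
/-!
Write `h(x) = (x mod d) - (x mod d')`. Splitting `i = d⌊i/d⌋ + (i mod d)`, both partial
transposes agree at `(i, j)` exactly when `h(i) = h(j)`, so the number of coincidences is
`∑_c |h⁻¹(c)|²`. A fibre of `h` in `[M]` has at most `(M / lcm(d,d')) · min(d,d')` points,
since `x` is determined by `h(x)`, `x mod min(d,d')` and `⌊x / lcm(d,d')⌋`; and `h` takes only
multiples of `gcd(d,d')` in `(-d', d)`, hence at most `2 lcm(d,d') / min(d,d')` values.
Cauchy–Schwarz then squeezes the density of coincidences between `min/(2 lcm)` and `min/lcm`.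
Finally `lcm(b,b') · d = lcm(bd, b'd) = lcm(b'd', b'd) = lcm(d,d') · b'` (and symmetrically),
so `lcm(b,b')/min(b,b') = lcm(d,d')/min(d,d')` and the two conditions coincide.
-/

open Filter

open Finset Topology

section Collisions

variable {α β : Type*} [Fintype α] [DecidableEq β] (f : α → β)

theorem card_collisions_eq_sum_sq :
    #{p : α × α | f p.1 = f p.2} = ∑ c ∈ univ.image f, #{x | f x = c} ^ 2 := by
  rw [card_eq_sum_card_fiberwise fun p _ => mem_image_of_mem f (mem_univ p.1)]
  refine sum_congr rfl fun c _ => ?_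
  rw [sq, ← card_product]
  congr 1
  ext ⟨x, y⟩
  simp only [mem_filter, mem_univ, true_and, mem_product]
  exact ⟨fun ⟨hxy, hx⟩ => ⟨hx, hxy ▸ hx⟩, fun ⟨hx, hy⟩ => ⟨hx.trans hy.symm, hx⟩⟩

theorem card_collisions_le {K : ℕ} (hK : ∀ c, #{x | f x = c} ≤ K) :
    #{p : α × α | f p.1 = f p.2} ≤ K * Fintype.card α := by
  rw [card_collisions_eq_sum_sq, ← card_univ, card_eq_sum_card_image f univ, mul_sum]
  exact sum_le_sum fun c _ => by rw [sq]; exact Nat.mul_le_mul_right _ (hK c)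

theorem card_sq_le_card_image_mul_card_collisions :
    Fintype.card α ^ 2 ≤ #(univ.image f) * #{p : α × α | f p.1 = f p.2} := by
  rw [card_collisions_eq_sum_sq, ← card_univ, card_eq_sum_card_image f univ]
  exact sq_sum_le_card_mul_sum_sq

end Collisions

def modDiff (d d' x : ℕ) : ℤ := (x % d : ℕ) - (x % d' : ℕ)

section ModDiff

variable {d d' : ℕ}

theorem mod_add_mul_div_eq_iff_modDiff_eq (i j : ℕ) :
    j % d + d * (i / d) = j % d' + d' * (i / d') ↔ modDiff d d' i = modDiff d d' j := by
  have := Nat.div_add_mod i d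
  have := Nat.div_add_mod i d'
  unfold modDiff
  omega

theorem pt_eq_pt_iff {b b' M : ℕ} (θ : Bool) (h : b * d = M) (h' : b' * d' = M)
    (x : Fin M × Fin M) :
    pt θ h x = pt θ h' x ↔ modDiff d d' x.1 = modDiff d d' x.2 := by
  rw [Prod.ext_iff, Fin.ext_iff, Fin.ext_iff]
  -- each coordinate of `pt` is of the form `j % d + d * (i / d)`
  cases θ <;>
    simp only [pt, Equiv.trans_apply, Equiv.symm_trans_apply, Equiv.symm_symm, finCongr_apply,
      finCongr_symm, Bool.false_eq_true, if_true, if_false, finProdFinEquiv_symm_apply,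
      finProdFinEquiv_apply_val, Fin.coe_divNat, Fin.coe_modNat, Fin.val_cast,
      mod_add_mul_div_eq_iff_modDiff_eq] <;>
    grind

theorem gcd_dvd_modDiff (x : ℕ) : (d.gcd d' : ℤ) ∣ modDiff d d' x := by
  have hx : modDiff d d' x = d' * (x / d' : ℕ) - d * (x / d : ℕ) := by
    have := Nat.div_add_mod x d
    have := Nat.div_add_mod x d'
    unfold modDiff
    omega
  rw [hx]
  exact dvd_sub (Dvd.dvd.mul_right (Int.natCast_dvd_natCast.2 (Nat.gcd_dvd_right d d')) _)
    (Dvd.dvd.mul_right (Int.natCast_dvd_natCast.2 (Nat.gcd_dvd_left d d')) _)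

theorem modDiff_mem_Ioo (hd : 0 < d) (hd' : 0 < d') (x : ℕ) :
    modDiff d d' x ∈ Ioo (-(d' : ℤ)) d := by
  have := Nat.mod_lt x hd
  have := Nat.mod_lt x hd'
  rw [mem_Ioo, modDiff]
  omega

theorem card_image_modDiff_mul_gcd_le (hd : 0 < d) (hd' : 0 < d') (M : ℕ) :
    #(univ.image fun x : Fin M => modDiff d d' x) * d.gcd d' ≤ d + d' := by
  obtain ⟨p, hp⟩ := Nat.gcd_dvd_left d d'
  obtain ⟨q, hq⟩ := Nat.gcd_dvd_right d d'
  have hg : (0 : ℤ) < d.gcd d' := by exact_mod_cast Nat.gcd_pos_of_pos_left d' hd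
  have himage : univ.image (fun x : Fin M => modDiff d d' x) ⊆
      (Ioo (-(q : ℤ)) p).image ((d.gcd d' : ℤ) * ·) := by
    simp only [subset_iff, mem_image, mem_univ, true_and, forall_exists_index,
      forall_apply_eq_imp_iff]
    intro x
    obtain ⟨t, ht⟩ := gcd_dvd_modDiff (d := d) (d' := d') x
    have hmem := modDiff_mem_Ioo hd hd' x
    rw [ht, mem_Ioo] at hmem
    have hpz : (d : ℤ) = d.gcd d' * p := by exact_mod_cast hp
    have hqz : (d' : ℤ) = d.gcd d' * q := by exact_mod_cast hq
    refine ⟨t, mem_Ioo.2 ⟨?_, ?_⟩, ht.symm⟩ <;> nlinarith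
  calc _ ≤ #(Ioo (-(q : ℤ)) p) * d.gcd d' :=
        Nat.mul_le_mul_right _ ((card_le_card himage).trans card_image_le)
    _ ≤ (p + q) * d.gcd d' := Nat.mul_le_mul_right _ (by rw [Int.card_Ioo]; omega)
    _ = d + d' := by linarith

theorem card_image_modDiff_mul_min_le (hd : 0 < d) (hd' : 0 < d') (M : ℕ) :
    #(univ.image fun x : Fin M => modDiff d d' x) * min d d' ≤ 2 * d.lcm d' := by
  have hsum : (d + d') * min d d' ≤ 2 * (d * d') := by
    rcases le_total d d' with h | h
    · rw [min_eq_left h]; nlinarith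
    · rw [min_eq_right h]; nlinarith
  refine Nat.le_of_mul_le_mul_right ?_ (Nat.gcd_pos_of_pos_left d' hd)
  calc _ = #(univ.image fun x : Fin M => modDiff d d' x) * d.gcd d' * min d d' := by ring
    _ ≤ (d + d') * min d d' :=
        Nat.mul_le_mul_right _ (card_image_modDiff_mul_gcd_le hd hd' M)
    _ ≤ 2 * (d * d') := hsum
    _ = 2 * d.lcm d' * d.gcd d' := by rw [← Nat.gcd_mul_lcm d d']; ring

theorem mod_eq_of_modDiff_eq {x y : ℕ} (hxy : modDiff d d' x = modDiff d d' y)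
    (hmin : x % min d d' = y % min d d') : x % d = y % d ∧ x % d' = y % d' := by
  unfold modDiff at hxy
  rcases le_total d d' with h | h
  · rw [min_eq_left h] at hmin; omega
  · rw [min_eq_right h] at hmin; omega

theorem card_modDiff_fiber_le (hd : 0 < d) (hd' : 0 < d') {M : ℕ} (hM : d.lcm d' ∣ M) (c : ℤ) :
    #{x : Fin M | modDiff d d' x = c} ≤ M / d.lcm d' * min d d' := by
  rw [← card_range (M / _), ← card_range (min d d'), ← card_product]
  refine card_le_card_of_injOn (fun x => (x.val / d.lcm d', x.val % min d d')) ?_ ?_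
  · intro x _
    simp only [coe_product, coe_range, Set.mem_prod, Set.mem_Iio]
    exact ⟨Nat.div_lt_div_of_lt_of_dvd hM x.isLt, Nat.mod_lt _ (lt_min hd hd')⟩
  · intro x hx y hy hxy
    simp only [coe_filter, mem_univ, true_and, Prod.mk.injEq] at hx hy hxy
    obtain ⟨hmod, hmod'⟩ := mod_eq_of_modDiff_eq (hx.trans hy.symm) hxy.2
    have hL : x.val % d.lcm d' = y.val % d.lcm d' := Nat.mod_lcm hmod hmod'
    exact Fin.ext <| by rw [← Nat.div_add_mod x.val (d.lcm d'), hxy.1, hL, Nat.div_add_mod]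

theorem card_pt_eq_pt {b b' M : ℕ} (θ : Bool) (h : b * d = M) (h' : b' * d' = M) :
    #{x | pt θ h x = pt θ h' x} = #{x : Fin M × Fin M | modDiff d d' x.1 = modDiff d d' x.2} :=
  congrArg card (filter_congr fun x _ => pt_eq_pt_iff θ h h' x)

theorem card_pt_eq_pt_mul_lcm_le {b b' M : ℕ} (θ : Bool) (h : b * d = M) (h' : b' * d' = M)
    (hd : 0 < d) (hd' : 0 < d') :
    #{x | pt θ h x = pt θ h' x} * d.lcm d' ≤ M ^ 2 * min d d' := by
  have hL : d.lcm d' ∣ M := Nat.lcm_dvd (Dvd.intro_left b h) (Dvd.intro_left b' h')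
  rw [card_pt_eq_pt]
  calc _ ≤ M / d.lcm d' * min d d' * M * d.lcm d' := by
        refine Nat.mul_le_mul_right _ ?_
        simpa using card_collisions_le _ (card_modDiff_fiber_le hd hd' hL)
    _ = d.lcm d' * (M / d.lcm d') * M * min d d' := by ring
    _ = M ^ 2 * min d d' := by rw [Nat.mul_div_cancel' hL]; ring

theorem sq_mul_min_le_card_pt_eq_pt {b b' M : ℕ} (θ : Bool) (h : b * d = M) (h' : b' * d' = M)
    (hd : 0 < d) (hd' : 0 < d') :
    M ^ 2 * min d d' ≤ 2 * d.lcm d' * #{x | pt θ h x = pt θ h' x} := by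
  have hCS := card_sq_le_card_image_mul_card_collisions fun x : Fin M => modDiff d d' x
  rw [Fintype.card_fin] at hCS
  rw [card_pt_eq_pt]
  calc _ ≤ _ * min d d' := Nat.mul_le_mul_right _ hCS
    _ = #(univ.image fun x : Fin M => modDiff d d' x) * min d d' *
          #{x : Fin M × Fin M | modDiff d d' x.1 = modDiff d d' x.2} := by ring
    _ ≤ _ := Nat.mul_le_mul_right _ (card_image_modDiff_mul_min_le hd hd' M)

end ModDiff

theorem Nat.lcm_mul_min_eq {b d b' d' : ℕ} (h : b * d = b' * d') :
    b.lcm b' * min d d' = d.lcm d' * min b b' := by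
  have h₁ : b.lcm b' * d = d.lcm d' * b' := by
    rw [← Nat.lcm_mul_right, h, Nat.lcm_mul_left, Nat.lcm_comm, mul_comm]
  have h₂ : b.lcm b' * d' = d.lcm d' * b := by
    rw [← Nat.lcm_mul_right, ← h, Nat.lcm_mul_left, Nat.lcm_comm, mul_comm]
  rw [← Nat.mul_min_mul_left, ← Nat.mul_min_mul_left, h₁, h₂, min_comm]

theorem lcm_div_min_eq_lcm_div_min {b d b' d' : ℕ} (h : b * d = b' * d') (hbd : 0 < b * d) :
    (b.lcm b' : ℝ) / (min b b' : ℝ) = (d.lcm d' : ℝ) / (min d d' : ℝ) := by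
  have hb'd' : 0 < b' * d' := h.symm.trans_gt hbd
  have := Nat.pos_of_mul_pos_left hbd
  have := Nat.pos_of_mul_pos_right hbd
  have := Nat.pos_of_mul_pos_left hb'd'
  have := Nat.pos_of_mul_pos_right hb'd'
  rw [div_eq_div_iff (by positivity) (by positivity)]
  exact_mod_cast Nat.lcm_mul_min_eq h

section Density

variable {b d b' d' M : ℕ} (θ : Bool) (h : b * d = M) (h' : b' * d' = M)

theorem card_pt_eq_pt_div_sq_le (hM : 0 < M) :
    (#{x | pt θ h x = pt θ h' x} : ℝ) / (M : ℝ) ^ 2 ≤ (min d d' : ℝ) / d.lcm d' := by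
  have hd : 0 < d := Nat.pos_of_mul_pos_left (h.trans_gt hM)
  have hd' : 0 < d' := Nat.pos_of_mul_pos_left (h'.trans_gt hM)
  have hle := (Nat.cast_le (α := ℝ)).2 (card_pt_eq_pt_mul_lcm_le θ h h' hd hd')
  push_cast at hle
  rw [div_le_div_iff₀ (by positivity) (by positivity)]
  linarith

theorem min_div_lcm_le_two_mul_card_pt_eq_pt_div_sq (hM : 0 < M) :
    (min d d' : ℝ) / d.lcm d' ≤ 2 * ((#{x | pt θ h x = pt θ h' x} : ℝ) / (M : ℝ) ^ 2) := by
  have hd : 0 < d := Nat.pos_of_mul_pos_left (h.trans_gt hM)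
  have hd' : 0 < d' := Nat.pos_of_mul_pos_left (h'.trans_gt hM)
  have hle := (Nat.cast_le (α := ℝ)).2 (sq_mul_min_le_card_pt_eq_pt θ h h' hd hd')
  push_cast at hle
  rw [mul_div_assoc', div_le_div_iff₀ (by positivity) (by positivity)]
  linarith

end Density

section Tendsto

variable {ι : Type*} {l : Filter ι}

theorem tendsto_nhds_zero_iff_of_le_of_le {f g : ι → ℝ} {C : ℝ} (hf : ∀ i, 0 ≤ f i)
    (hfg : ∀ i, f i ≤ g i) (hgf : ∀ i, g i ≤ C * f i) :
    Tendsto f l (𝓝 0) ↔ Tendsto g l (𝓝 0) := by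
  refine ⟨fun hf0 => squeeze_zero (fun i => (hf i).trans (hfg i)) hgf ?_,
    fun hg0 => squeeze_zero hf hfg hg0⟩
  simpa using hf0.const_mul C

theorem tendsto_inv_atTop_iff_tendsto_nhds_zero {𝕜 : Type*} [Field 𝕜] [LinearOrder 𝕜]
    [IsStrictOrderedRing 𝕜] [TopologicalSpace 𝕜] [OrderTopology 𝕜] {f : ι → 𝕜}
    (hf : ∀ i, 0 < f i) :
    Tendsto (fun i => (f i)⁻¹) l atTop ↔ Tendsto f l (𝓝 0) := by
  constructor
  · intro h
    simpa [Pi.inv_def] using h.inv_tendsto_atTop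
  · intro h
    exact (tendsto_nhdsWithin_iff.2 ⟨h, .of_forall hf⟩).inv_tendsto_nhdsGT_zero

end Tendsto

theorem stmt_7_general (b d b' d' M : ℕ → ℕ)
    (hb : ∀ n, 0 < b n) (hd : ∀ n, 0 < d n)
    (hM : ∀ n, b n * d n = M n) (hM' : ∀ n, b' n * d' n = M n)
    (θ : Bool) :
    Tendsto
      (fun n => ((Finset.univ.filter fun x : Fin (M n) × Fin (M n) =>
          pt θ (hM n) x = pt θ (hM' n) x).card : ℝ) / (M n : ℝ) ^ 2)
      atTop (nhds 0)
    ↔ (Tendsto (fun n => (Nat.lcm (b n) (b' n) : ℝ) / (min (b n) (b' n) : ℝ)) atTop atTop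
      ∧ Tendsto (fun n => (Nat.lcm (d n) (d' n) : ℝ) / (min (d n) (d' n) : ℝ)) atTop atTop) := by
  have hMpos n : 0 < M n := hM n ▸ Nat.mul_pos (hb n) (hd n)
  have hlcm_div_min n := lcm_div_min_eq_lcm_div_min ((hM n).trans (hM' n).symm)
    ((hM n).trans_gt (hMpos n))
  simp only [hlcm_div_min, and_self, ← inv_div (min _ _ : ℝ)]
  rw [tendsto_inv_atTop_iff_tendsto_nhds_zero, tendsto_nhds_zero_iff_of_le_of_le (C := 2)]
  · exact fun n => by positivity
  · exact fun n => card_pt_eq_pt_div_sq_le θ (hM n) (hM' n) (hMpos n)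
  · exact fun n => min_div_lcm_le_two_mul_card_pt_eq_pt_div_sq θ (hM n) (hM' n) (hMpos n)
  · intro n
    have := hd n
    have := Nat.pos_of_mul_pos_left ((hM' n).trans_gt (hMpos n))
    positivity

/-- for non-decreasing sequences of positive integers with
`b_N·d_N = b'_N·d'_N = M_N → ∞` and a common `ϑ ∈ {−1,1}` (encoded by `θ : Bool`),
`(1/M_N²)·#{(i,j) : Γ_{b_N,d_N}^{(ϑ)}(i,j) = Γ_{b'_N,d'_N}^{(ϑ)}(i,j)} → 0` iff
`lcm(b_N,b'_N)/min(b_N,b'_N) → ∞` and `lcm(d_N,d'_N)/min(d_N,d'_N) → ∞`. -/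
theorem stmt_7 (b d b' d' M : ℕ → ℕ)
    (hbm : Monotone b) (hdm : Monotone d) (hb'm : Monotone b') (hd'm : Monotone d')
    (hb : ∀ n, 0 < b n) (hd : ∀ n, 0 < d n) (hb' : ∀ n, 0 < b' n) (hd' : ∀ n, 0 < d' n)
    (hM : ∀ n, b n * d n = M n) (hM' : ∀ n, b' n * d' n = M n)
    (hMtop : Tendsto M atTop atTop) (θ : Bool) :
    Tendsto
      (fun n => ((Finset.univ.filter fun x : Fin (M n) × Fin (M n) =>
          pt θ (hM n) x = pt θ (hM' n) x).card : ℝ) / (M n : ℝ) ^ 2)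
      atTop (nhds 0)
    ↔ (Tendsto (fun n => (Nat.lcm (b n) (b' n) : ℝ) / (min (b n) (b' n) : ℝ)) atTop atTop
      ∧ Tendsto (fun n => (Nat.lcm (d n) (d' n) : ℝ) / (min (d n) (d' n) : ℝ)) atTop atTop) :=
  stmt_7_general b d b' d' M hb hd hM hM' θ
end

section
/- Let (b_N), (d_N), (b'_N), (d'_N) be non-decreasing sequences of positive integers with b_N·d_N = b'_N·d'_N = M_N for all N, where M_N → ∞, and let ϑ, ϑ' ∈ {−1, 1} with ϑ ≠ ϑ'. If lim_{N→∞} (1/M_N²) · #{ (i,j) ∈ [M_N]² : Γ_{b_N,d_N}^{(ϑ)}(i,j) = Γ_{b'_N,d'_N}^{(ϑ')}(i,j) } = 0, then #{ (i₁, i₂, j) ∈ [M_N]³ : Γ_{b_N,d_N}^{(ϑ)}(i₁, j) = Γ_{b'_N,d'_N}^{(ϑ')}(i₂, j) } = o(M_N²), i.e. this count divided by M_N² tends to 0 as N → ∞. -/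
open Filter

lemma ptE_val {b d M : ℕ} (h : b * d = M) (a : Fin b) (c : Fin d) :
    ((((finCongr h).symm.trans finProdFinEquiv.symm).symm (a, c)) : ℕ) = c + d * a := by
  simp [finProdFinEquiv]

lemma ptE_decomp {b d M : ℕ} (h : b * d = M) (x : Fin M) :
    (x : ℕ) = ((((finCongr h).symm.trans finProdFinEquiv.symm) x).2 : ℕ)
      + d * ((((finCongr h).symm.trans finProdFinEquiv.symm) x).1 : ℕ) := by
  conv_lhs => rw [← Equiv.symm_apply_apply ((finCongr h).symm.trans finProdFinEquiv.symm) x]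
  rw [ptE_val]

lemma pt_eq_imp {b d b' d' M : ℕ} (h : b * d = M) (h' : b' * d' = M) {θ θ' : Bool}
    (hθ : θ ≠ θ') (i₁ i₂ j : Fin M) (he : pt θ h (i₁, j) = pt θ' h' (i₂, j)) : i₁ = i₂ := by
  set e := (finCongr h).symm.trans finProdFinEquiv.symm with hedef
  set e' := (finCongr h').symm.trans finProdFinEquiv.symm with he'def
  have hu := ptE_decomp h i₁
  have hv := ptE_decomp h j
  have hw := ptE_decomp h' i₂
  have hv' := ptE_decomp h' j
  rw [← hedef] at hu hv
  rw [← he'def] at hw hv'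
  have hA : ((e.symm ((e i₁).1, (e j).2)) : ℕ) = ((e'.symm ((e' j).1, (e' i₂).2)) : ℕ) ∧
      ((e.symm ((e j).1, (e i₁).2)) : ℕ) = ((e'.symm ((e' i₂).1, (e' j).2)) : ℕ) := by
    rcases Bool.eq_false_or_eq_true θ with h1 | h1 <;>
      rcases Bool.eq_false_or_eq_true θ' with h2 | h2 <;>
      simp [h1, h2] at hθ <;>
      simp only [pt, h1, h2, if_true, if_false, Bool.false_eq_true, Prod.mk.injEq,
        ← hedef, ← he'def] at he
    · exact ⟨congrArg Fin.val he.1, congrArg Fin.val he.2⟩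
    · exact ⟨congrArg Fin.val he.2, congrArg Fin.val he.1⟩
  obtain ⟨hA1, hA2⟩ := hA
  rw [ptE_val, ptE_val] at hA1 hA2
  apply Fin.val_injective
  omega


/-- for non-decreasing sequences of positive integers with
`b_N·d_N = b'_N·d'_N = M_N → ∞` and opposite `ϑ ≠ ϑ'` (encoded by `θ ≠ θ'`), if
`(1/M_N²)·#{(i,j) : Γ_{b_N,d_N}^{(ϑ)}(i,j) = Γ_{b'_N,d'_N}^{(ϑ')}(i,j)} → 0`, then
`#{(i₁,i₂,j) : Γ_{b_N,d_N}^{(ϑ)}(i₁,j) = Γ_{b'_N,d'_N}^{(ϑ')}(i₂,j)} = o(M_N²)`. -/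
theorem stmt_9 (b d b' d' M : ℕ → ℕ)
    (hbm : Monotone b) (hdm : Monotone d) (hb'm : Monotone b') (hd'm : Monotone d')
    (hb : ∀ n, 0 < b n) (hd : ∀ n, 0 < d n) (hb' : ∀ n, 0 < b' n) (hd' : ∀ n, 0 < d' n)
    (hM : ∀ n, b n * d n = M n) (hM' : ∀ n, b' n * d' n = M n)
    (hMtop : Tendsto M atTop atTop) (θ θ' : Bool) (hθ : θ ≠ θ')
    (h0 : Tendsto
      (fun n => ((Finset.univ.filter fun x : Fin (M n) × Fin (M n) =>
          pt θ (hM n) x = pt θ' (hM' n) x).card : ℝ) / (M n : ℝ) ^ 2)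
      atTop (nhds 0)) :
    Tendsto
      (fun n => ((Finset.univ.filter fun x : Fin (M n) × Fin (M n) × Fin (M n) =>
          pt θ (hM n) (x.1, x.2.2) = pt θ' (hM' n) (x.2.1, x.2.2)).card : ℝ) / (M n : ℝ) ^ 2)
      atTop (nhds 0) := by
  convert h0 using 3 with n
  congr 1
  apply Finset.card_bij (fun x _ => (x.1, x.2.2))
  · intro x hx
    simp only [Finset.mem_filter, Finset.mem_univ, true_and] at hx ⊢
    have := pt_eq_imp (hM n) (hM' n) hθ x.1 x.2.1 x.2.2 hx
    rw [← this] at hx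
    exact hx
  · intro x hx y hy hxy
    simp only [Finset.mem_filter, Finset.mem_univ, true_and] at hx hy
    have h1 := pt_eq_imp (hM n) (hM' n) hθ x.1 x.2.1 x.2.2 hx
    have h2 := pt_eq_imp (hM n) (hM' n) hθ y.1 y.2.1 y.2.2 hy
    obtain ⟨hxy1, hxy2⟩ := Prod.mk.injEq .. ▸ hxy
    exact Prod.ext hxy1 (Prod.ext (h1 ▸ h2 ▸ hxy1) hxy2)
  · intro x hx
    refine ⟨(x.1, x.1, x.2), ?_, rfl⟩
    simp only [Finset.mem_filter, Finset.mem_univ, true_and] at hx ⊢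
    exact hx
end
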